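/- arXiv:2408.15181 — 3 statements merged into one kernel-verified Lean document; each statement's English description precedes it below -/
import Mathlib

section
/- Let c ∈ ℕ, let G be a graph, and let [S, S̄] be a matching cut of G. If both induced subgraphs G[S] and G[S̄] admit a c-gel, then G admits a (c+1)-gel. -/
/-- A walk is *increasing* with respect to an edge-labeling if the sequence of labels of its
edges, traversed from the first endpoint to the last, is non-decreasing. -/
def IsIncreasing {V : Type*} (G : SimpleGraph V) (lab : Sym2 V → ℝ) {x y : V}
    (p : G.Walk x y) : Prop :=
  (p.edges.map lab).Chain' (· ≤ ·)

/-- An edge-labeling is *good* if for every ordered pair `(x, y)` of vertices there do not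
exist two distinct increasing paths from `x` to `y`. -/
def IsGoodLabeling {V : Type*} (G : SimpleGraph V) (lab : Sym2 V → ℝ) : Prop :=
  ∀ (x y : V) (p q : G.Walk x y), p.IsPath → q.IsPath →
    IsIncreasing G lab p → IsIncreasing G lab q → p = q

/-- A `c`-gel: a good edge-labeling taking at most `c` distinct values on the edges. -/
def IsCGel {V : Type*} (G : SimpleGraph V) (c : ℕ) (lab : Sym2 V → ℝ) : Prop :=
  IsGoodLabeling G lab ∧ (lab '' G.edgeSet).ncard ≤ c

/-! Rank each of the two gels so that it takes values in `{0, …, c - 1}`, and give every cut edge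
the label `c`. An increasing path can then use a cut edge only as its last edge: the next edge
would need a label `≥ c`, so it would be a cut edge at the same vertex, i.e. the same edge
backwards. Hence two increasing `x`–`y` paths either both stay on the side of `x`, where that
side's gel makes them equal, or both end with the unique cut edge at `y`, and their prefixes are
equal for the same reason. -/

open SimpleGraph Function

section

variable {V W : Type*} {G : SimpleGraph V} {lab : Sym2 V → ℝ}

lemma isIncreasing_map_iff {G' : SimpleGraph W} (f : G →g G') (lab : Sym2 W → ℝ) {x y : V}
    (p : G.Walk x y) :
    IsIncreasing G' lab (p.map f) ↔ IsIncreasing G (lab ∘ Sym2.map f) p := by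
  simp only [IsIncreasing, Walk.edges_map, List.map_map]

lemma isIncreasing_comp_iff {f : ℝ → ℝ} (hf : StrictMonoOn f (lab '' G.edgeSet)) {x y : V}
    (p : G.Walk x y) : IsIncreasing G (f ∘ lab) p ↔ IsIncreasing G lab p := by
  unfold IsIncreasing
  change List.IsChain _ _ ↔ List.IsChain _ _
  rw [List.isChain_map, List.isChain_map]
  exact List.IsChain.iff_of_mem_imp fun a b ha hb =>
    hf.le_iff_le ⟨a, p.edges_subset_edgeSet ha, rfl⟩ ⟨b, p.edges_subset_edgeSet hb, rfl⟩

lemma IsIncreasing.of_cons {u v w : V} {h : G.Adj u v} {p : G.Walk v w}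
    (hp : IsIncreasing G lab (.cons h p)) : IsIncreasing G lab p := by
  unfold IsIncreasing at hp ⊢
  rw [Walk.edges_cons, List.map_cons] at hp
  exact hp.tail

lemma IsIncreasing.of_concat {u v w : V} {p : G.Walk u v} {h : G.Adj v w}
    (hp : IsIncreasing G lab (p.concat h)) : IsIncreasing G lab p := by
  unfold IsIncreasing at hp ⊢
  rw [Walk.edges_concat, List.concat_eq_append, List.map_append] at hp
  exact (List.isChain_append.1 hp).1

lemma IsGoodLabeling.comp_strictMonoOn {f : ℝ → ℝ} (hlab : IsGoodLabeling G lab)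
    (hf : StrictMonoOn f (lab '' G.edgeSet)) : IsGoodLabeling G (f ∘ lab) :=
  fun x y p q hp hq hip hiq =>
    hlab x y p q hp hq ((isIncreasing_comp_iff hf p).1 hip) ((isIncreasing_comp_iff hf q).1 hiq)

lemma IsGoodLabeling.eq_of_support_subset {P : Set V}
    (hgood : IsGoodLabeling (G.induce P) (lab ∘ Sym2.map (↑))) {x y : V} {p q : G.Walk x y}
    (hp : p.IsPath) (hq : q.IsPath) (hip : IsIncreasing G lab p) (hiq : IsIncreasing G lab q)
    (hpP : ∀ v ∈ p.support, v ∈ P) (hqP : ∀ v ∈ q.support, v ∈ P) : p = q := by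
  set φ := (Embedding.induce P).toHom
  have hpφ : (p.induce P hpP).map φ = p := p.map_induce hpP
  have hqφ : (q.induce P hqP).map φ = q := q.map_induce hqP
  have hlift : p.induce P hpP = q.induce P hqP :=
    hgood _ _ _ _ (Walk.IsPath.of_map (f := φ) (by rwa [hpφ]))
      (Walk.IsPath.of_map (f := φ) (by rwa [hqφ]))
      ((isIncreasing_map_iff φ lab _).1 (by rwa [hpφ]))
      ((isIncreasing_map_iff φ lab _).1 (by rwa [hqφ]))
  rw [← hpφ, ← hqφ, hlift]

/-- The edges between `P` and `Pᶜ` form a matching, possibly empty. -/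
def IsMatchingCut (G : SimpleGraph V) (P : Set V) : Prop :=
  ∀ ⦃v u w : V⦄, G.Adj v u → G.Adj v w → Xor (v ∈ P) (u ∈ P) → Xor (v ∈ P) (w ∈ P) → u = w

lemma xor_mem_compl_iff {P : Set V} {u v : V} : Xor (u ∈ Pᶜ) (v ∈ Pᶜ) ↔ Xor (u ∈ P) (v ∈ P) :=
  xor_not_not

lemma IsMatchingCut.compl {P : Set V} (hP : IsMatchingCut G P) : IsMatchingCut G Pᶜ :=
  fun _ _ _ hu hw hxu hxw => hP hu hw (xor_mem_compl_iff.1 hxu) (xor_mem_compl_iff.1 hxw)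

section MatchingCut

variable {P : Set V} {M : ℝ}

lemma eq_of_xor_of_label_le (hcut : ∀ u v, G.Adj u v → (M ≤ lab s(u, v) ↔ Xor (u ∈ P) (v ∈ P)))
    (hP : IsMatchingCut G P) {u v w : V} (huv : G.Adj u v) (hvw : G.Adj v w)
    (hx : Xor (u ∈ P) (v ∈ P)) (hle : lab s(u, v) ≤ lab s(v, w)) : u = w :=
  hP huv.symm hvw (xor_comm _ _ ▸ hx) ((hcut v w hvw).1 (((hcut u v huv).2 hx).trans hle))

lemma IsIncreasing.support_subset_or_eq_concat
    (hcut : ∀ u v, G.Adj u v → (M ≤ lab s(u, v) ↔ Xor (u ∈ P) (v ∈ P)))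
    (hP : IsMatchingCut G P) {x y : V} {p : G.Walk x y} (hp : p.IsPath)
    (hinc : IsIncreasing G lab p) (hx : x ∈ P) :
    (∀ v ∈ p.support, v ∈ P) ∨
      ∃ (z : V) (h : G.Adj z y) (p' : G.Walk x z),
        p = p'.concat h ∧ (∀ v ∈ p'.support, v ∈ P) ∧ y ∉ P := by
  induction p with
  | nil => exact .inl fun v hv => (List.mem_singleton.1 hv) ▸ hx
  | @cons u v w h q ih =>
    by_cases hv : v ∈ P
    · rcases ih hp.of_cons hinc.of_cons hv with hq | ⟨z, h', q', rfl, hq', hw⟩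
      · exact .inl fun t ht => (List.mem_cons.1 ht).elim (· ▸ hx) (hq t)
      · exact .inr ⟨z, h', .cons h q', (Walk.concat_cons h q' h').symm,
          fun t ht => (List.mem_cons.1 ht).elim (· ▸ hx) (hq' t), hw⟩
    · cases q with
      | nil => exact .inr ⟨u, h, .nil, (Walk.concat_nil h).symm,
          fun t ht => (List.mem_singleton.1 ht) ▸ hx, hv⟩
      | @cons _ v' _ h' r =>
        have hle : lab s(u, v) ≤ lab s(v, v') := by
          unfold IsIncreasing at hinc
          simp only [Walk.edges_cons, List.map_cons] at hinc
          exact (List.isChain_cons_cons.1 hinc).1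
        obtain rfl := eq_of_xor_of_label_le hcut hP h h' (.inl ⟨hx, hv⟩) hle
        exact ((Walk.cons_isPath_iff _ _).1 hp).2 (by simp) |>.elim

lemma IsGoodLabeling.eq_of_isIncreasing_of_mem
    (hgood : IsGoodLabeling (G.induce P) (lab ∘ Sym2.map (↑)))
    (hcut : ∀ u v, G.Adj u v → (M ≤ lab s(u, v) ↔ Xor (u ∈ P) (v ∈ P)))
    (hP : IsMatchingCut G P) {x y : V} {p q : G.Walk x y} (hp : p.IsPath) (hq : q.IsPath)
    (hip : IsIncreasing G lab p) (hiq : IsIncreasing G lab q) (hx : x ∈ P) : p = q := by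
  rcases hip.support_subset_or_eq_concat hcut hP hp hx with hpP | ⟨z, h, p', rfl, hp'P, hy⟩ <;>
    rcases hiq.support_subset_or_eq_concat hcut hP hq hx with hqP | ⟨z', h', q', rfl, hq'P, hy'⟩
  · exact hgood.eq_of_support_subset hp hq hip hiq hpP hqP
  · exact absurd (hpP y p.end_mem_support) hy'
  · exact absurd (hqP y q.end_mem_support) hy
  · obtain rfl : z = z' := hP h.symm h'.symm (.inr ⟨hp'P z p'.end_mem_support, hy⟩)
      (.inr ⟨hq'P _ q'.end_mem_support, hy⟩)
    rw [Walk.concat_eq_append] at hp hq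
    rw [hgood.eq_of_support_subset hp.of_append_left hq.of_append_left hip.of_concat
      hiq.of_concat hp'P hq'P]

theorem isGoodLabeling_of_isMatchingCut
    (hgood : IsGoodLabeling (G.induce P) (lab ∘ Sym2.map (↑)))
    (hgood' : IsGoodLabeling (G.induce Pᶜ) (lab ∘ Sym2.map (↑)))
    (hcut : ∀ u v, G.Adj u v → (M ≤ lab s(u, v) ↔ Xor (u ∈ P) (v ∈ P)))
    (hP : IsMatchingCut G P) : IsGoodLabeling G lab := by
  intro x y p q hp hq hip hiq
  by_cases hx : x ∈ P
  · exact hgood.eq_of_isIncreasing_of_mem hcut hP hp hq hip hiq hx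
  · exact hgood'.eq_of_isIncreasing_of_mem (fun u v h => (hcut u v h).trans xor_mem_compl_iff.symm)
      hP.compl hp hq hip hiq hx

end MatchingCut

section Rank

variable {α : Type*} [Preorder α] {T : Set α}

lemma strictMonoOn_ncard_inter_Iio (hT : T.Finite) :
    StrictMonoOn (fun t => (T ∩ Set.Iio t).ncard) T :=
  fun a ha _ _ hab => Set.ncard_lt_ncard
    ⟨Set.inter_subset_inter_right _ (Set.Iio_subset_Iio hab.le),
      fun h => lt_irrefl a (h ⟨ha, hab⟩).2⟩
    (hT.subset Set.inter_subset_left)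

lemma ncard_inter_Iio_lt (hT : T.Finite) {t : α} (ht : t ∈ T) : (T ∩ Set.Iio t).ncard < T.ncard :=
  Set.ncard_lt_ncard ⟨Set.inter_subset_left, fun h => lt_irrefl t (h ht).2⟩ hT

end Rank

lemma IsCGel.exists_image_subset_natCast_Iio {H : SimpleGraph V} {c : ℕ} (hlab : IsCGel H c lab)
    (hfin : H.edgeSet.Finite) :
    ∃ lab' : Sym2 V → ℝ, IsGoodLabeling H lab' ∧ lab' '' H.edgeSet ⊆ Nat.cast '' Set.Iio c := by
  set T := lab '' H.edgeSet
  have hT : T.Finite := hfin.image lab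
  refine ⟨(fun t => ((T ∩ Set.Iio t).ncard : ℝ)) ∘ lab, hlab.1.comp_strictMonoOn ?_, ?_⟩
  · exact fun a ha b hb hab => Nat.cast_lt.2 (strictMonoOn_ncard_inter_Iio hT ha hb hab)
  · rintro _ ⟨e, he, rfl⟩
    exact ⟨_, (ncard_inter_Iio_lt hT ⟨e, he, rfl⟩).trans_le hlab.2, rfl⟩

section Glue

variable {β : Type*} {P : Set V}

/-- The labeling of `G` that is `labP` inside `P`, `labPc` inside `Pᶜ` and `M` across. -/
noncomputable def glueLabeling (P : Set V) (labP : Sym2 P → β) (labPc : Sym2 ↥Pᶜ → β) (M : β) :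
    Sym2 V → β :=
  extend (Sym2.map (↑)) labP (extend (Sym2.map (↑)) labPc fun _ => M)

lemma not_exists_map_val_eq {u : V} {e : Sym2 V} (hu : u ∈ e) (huP : u ∉ P) :
    ¬∃ a : Sym2 P, a.map (↑) = e := by
  rintro ⟨a, rfl⟩
  obtain ⟨b, -, rfl⟩ := Sym2.mem_map.1 hu
  exact huP b.2

variable {labP : Sym2 P → β} {labPc : Sym2 ↥Pᶜ → β} {M : β}

lemma glueLabeling_comp_map_val : glueLabeling P labP labPc M ∘ Sym2.map (↑) = labP :=
  extend_comp (Sym2.map.injective Subtype.val_injective) _ _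

lemma glueLabeling_comp_map_val_compl :
    glueLabeling P labP labPc M ∘ Sym2.map ((↑) : ↥Pᶜ → V) = labPc := by
  funext e
  induction e using Sym2.ind with
  | _ u v =>
    rw [comp_apply, glueLabeling, extend_apply' _ _ _ (not_exists_map_val_eq
      (Sym2.mem_map.2 ⟨u, Sym2.mem_mk_left u v, rfl⟩) u.2),
      (Sym2.map.injective Subtype.val_injective).extend_apply]

lemma glueLabeling_mk_of_mem {u v : V} (hu : u ∈ P) (hv : v ∈ P) :
    glueLabeling P labP labPc M s(u, v) = labP s(⟨u, hu⟩, ⟨v, hv⟩) :=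
  congrFun glueLabeling_comp_map_val s(⟨u, hu⟩, ⟨v, hv⟩)

lemma glueLabeling_mk_of_notMem {u v : V} (hu : u ∉ P) (hv : v ∉ P) :
    glueLabeling P labP labPc M s(u, v) = labPc s(⟨u, hu⟩, ⟨v, hv⟩) :=
  congrFun glueLabeling_comp_map_val_compl s(⟨u, hu⟩, ⟨v, hv⟩)

lemma glueLabeling_mk_of_xor {u v : V} (h : Xor (u ∈ P) (v ∈ P)) :
    glueLabeling P labP labPc M s(u, v) = M := by
  have across : ∀ a b, a ∈ s(u, v) → b ∈ s(u, v) → a ∈ P → b ∉ P →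
      glueLabeling P labP labPc M s(u, v) = M := fun a b ha hb haP hbP => by
    rw [glueLabeling, extend_apply' _ _ _ (not_exists_map_val_eq hb hbP),
      extend_apply' _ _ _ (not_exists_map_val_eq (P := Pᶜ) ha (not_not.2 haP))]
  rcases h with ⟨hu, hv⟩ | ⟨hv, hu⟩
  · exact across u v (Sym2.mem_mk_left u v) (Sym2.mem_mk_right u v) hu hv
  · exact across v u (Sym2.mem_mk_right u v) (Sym2.mem_mk_left u v) hv hu

lemma image_glueLabeling_edgeSet_subset :
    glueLabeling P labP labPc M '' G.edgeSet ⊆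
      insert M (labP '' (G.induce P).edgeSet ∪ labPc '' (G.induce Pᶜ).edgeSet) := by
  rintro _ ⟨e, he, rfl⟩
  induction e using Sym2.ind with
  | _ u v =>
    by_cases hu : u ∈ P <;> by_cases hv : v ∈ P
    · exact .inr (.inl ⟨_, he, (glueLabeling_mk_of_mem hu hv).symm⟩)
    · exact .inl (glueLabeling_mk_of_xor (.inl ⟨hu, hv⟩))
    · exact .inl (glueLabeling_mk_of_xor (.inr ⟨hv, hu⟩))
    · exact .inr (.inr ⟨_, he, (glueLabeling_mk_of_notMem hu hv).symm⟩)

lemma le_glueLabeling_iff_xor [LinearOrder β]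
    (hP : ∀ e ∈ (G.induce P).edgeSet, labP e < M) (hPc : ∀ e ∈ (G.induce Pᶜ).edgeSet, labPc e < M)
    {u v : V} (h : G.Adj u v) : M ≤ glueLabeling P labP labPc M s(u, v) ↔ Xor (u ∈ P) (v ∈ P) := by
  by_cases hu : u ∈ P <;> by_cases hv : v ∈ P
  · simpa [glueLabeling_mk_of_mem hu hv, hu, hv] using hP _ h
  · simp [glueLabeling_mk_of_xor (.inl ⟨hu, hv⟩), hu, hv]
  · simp [glueLabeling_mk_of_xor (.inr ⟨hv, hu⟩), hu, hv]
  · simpa [glueLabeling_mk_of_notMem hu hv, hu, hv] using hPc _ h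

end Glue

end

theorem matching_cut_cgel_general {V : Type*} [Fintype V] (G : SimpleGraph V) (c : ℕ) (S : Set V)
    (hmatch : ∀ u u' w w' : V, u ∈ S → u' ∈ S → w ∉ S → w' ∉ S →
      G.Adj u w → G.Adj u' w' → (u = u' ↔ w = w'))
    (hS : ∃ lab : Sym2 ↥S → ℝ, IsCGel (G.induce S) c lab)
    (hSc : ∃ lab : Sym2 ↥(Sᶜ) → ℝ, IsCGel (G.induce Sᶜ) c lab) :
    ∃ lab : Sym2 V → ℝ, IsCGel G (c + 1) lab := by
  obtain ⟨labS, goodS, hvalS⟩ := hS.choose_spec.exists_image_subset_natCast_Iio (Set.toFinite _)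
  obtain ⟨labC, goodC, hvalC⟩ := hSc.choose_spec.exists_image_subset_natCast_Iio (Set.toFinite _)
  have hcut : IsMatchingCut G S := by
    intro v u w hu hw hxu hxw
    by_cases hv : v ∈ S
    · simp only [hv, xor_true] at hxu hxw
      exact (hmatch v v u w hv hv hxu hxw hu hw).1 rfl
    · simp only [hv, xor_false, id] at hxu hxw
      exact (hmatch u w v v hxu hxw hv hv hu.symm hw.symm).2 rfl
  have hlt : ∀ x ∈ (Nat.cast '' Set.Iio c : Set ℝ), x < c := by
    rintro _ ⟨n, hn, rfl⟩
    exact Nat.cast_lt.2 hn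
  refine ⟨glueLabeling S labS labC c, isGoodLabeling_of_isMatchingCut (M := c) ?_ ?_
    (fun u v => le_glueLabeling_iff_xor (fun e he => hlt _ (hvalS ⟨e, he, rfl⟩))
      (fun e he => hlt _ (hvalC ⟨e, he, rfl⟩))) hcut, ?_⟩
  · rwa [glueLabeling_comp_map_val]
  · rwa [glueLabeling_comp_map_val_compl]
  calc (glueLabeling S labS labC (c : ℝ) '' G.edgeSet).ncard
      ≤ (insert (c : ℝ) (Nat.cast '' Set.Iio c)).ncard :=
        Set.ncard_le_ncard (image_glueLabeling_edgeSet_subset.trans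
          (Set.insert_subset_insert (Set.union_subset hvalS hvalC)))
          (((Set.finite_Iio c).image _).insert _)
    _ ≤ (Nat.cast '' Set.Iio c : Set ℝ).ncard + 1 := Set.ncard_insert_le _ _
    _ ≤ c + 1 := by grw [Set.ncard_image_le (Set.finite_Iio c), Set.ncard_Iio_nat]

/-- Let `[S, S̄]` be a matching cut of `G`: there is at least one edge between `S` and its
complement, and the edges between `S` and its complement are pairwise vertex-disjoint.
If both `G[S]` and `G[S̄]` admit a `c`-gel, then `G` admits a `(c+1)`-gel. -/
theorem matching_cut_cgel {V : Type*} [Fintype V] (G : SimpleGraph V) (c : ℕ) (S : Set V)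
    (hne : ∃ u w : V, u ∈ S ∧ w ∉ S ∧ G.Adj u w)
    (hmatch : ∀ u u' w w' : V, u ∈ S → u' ∈ S → w ∉ S → w' ∉ S →
      G.Adj u w → G.Adj u' w' → (u = u' ↔ w = w'))
    (hS : ∃ lab : Sym2 ↥S → ℝ, IsCGel (G.induce S) c lab)
    (hSc : ∃ lab : Sym2 ↥(Sᶜ) → ℝ, IsCGel (G.induce Sᶜ) c lab) :
    ∃ lab : Sym2 V → ℝ, IsCGel G (c + 1) lab :=
  matching_cut_cgel_general G c S hmatch hS hSc
end

section
/- An edge-labeling of the cycle C_4 on four vertices with values in {1, 2} is good if and only if its edges take alternately the values 1 and 2 in cyclic order (equivalently, any two edges of C_4 sharing a vertex receive distinct labels). -/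
/-- The cycle `C₄` on four vertices, with vertex set `ZMod 4` and edges `{i, i+1}`. -/
def C4 : SimpleGraph (ZMod 4) := SimpleGraph.fromRel (fun i j => j = i + 1)

/-! If two consecutive edges `s(i, i+1)`, `s(i+1, i+2)` carry the same label, then the path
`i, i+1, i+2` and the other path `i, i+3, i+2` between the same ends, or both their reverses, are
increasing. Conversely, when adjacent edges carry distinct labels from `{1, 2}`, increasing paths
are strictly increasing, hence have at most two edges, and a two-edge one must start along the
unique edge labelled `1` at its first vertex; in a triangle-free graph this leaves at most one
increasing path between any two vertices. -/

open SimpleGraph Walk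

section IncreasingPaths

variable {V : Type*} {G : SimpleGraph V} {lab : Sym2 V → ℝ}

lemma isIncreasing_cons_cons {x u v y : V} (h₁ : G.Adj x u) (h₂ : G.Adj u v) (r : G.Walk v y) :
    IsIncreasing G lab (cons h₁ (cons h₂ r)) ↔
      lab s(x, u) ≤ lab s(u, v) ∧ IsIncreasing G lab (cons h₂ r) :=
  List.isChain_cons_cons

lemma isIncreasing_cons_nil {x y : V} (h : G.Adj x y) : IsIncreasing G lab (cons h nil) :=
  List.isChain_singleton _

lemma isPath_cons_cons_nil {x u y : V} (h₁ : G.Adj x u) (h₂ : G.Adj u y) (hxy : x ≠ y) :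
    (cons h₁ (cons h₂ nil)).IsPath := by
  simp [cons_isPath_iff, h₁.ne, h₂.ne, hxy]

theorem IsGoodLabeling.label_ne_of_square (hgood : IsGoodLabeling G lab) {x u v y : V}
    (hxu : G.Adj x u) (huy : G.Adj u y) (hxv : G.Adj x v) (hvy : G.Adj v y)
    (hxy : x ≠ y) (huv : u ≠ v) : lab s(x, u) ≠ lab s(u, y) := by
  intro heq
  rcases le_total (lab s(x, v)) (lab s(v, y)) with hle | hle
  · have := hgood x y (cons hxu (cons huy nil)) (cons hxv (cons hvy nil))
      (isPath_cons_cons_nil _ _ hxy) (isPath_cons_cons_nil _ _ hxy)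
      ((isIncreasing_cons_cons _ _ _).2 ⟨heq.le, isIncreasing_cons_nil _⟩)
      ((isIncreasing_cons_cons _ _ _).2 ⟨hle, isIncreasing_cons_nil _⟩)
    exact huv (congrArg (·.getVert 1) this)
  · have := hgood y x (cons huy.symm (cons hxu.symm nil)) (cons hvy.symm (cons hxv.symm nil))
      (isPath_cons_cons_nil _ _ hxy.symm) (isPath_cons_cons_nil _ _ hxy.symm)
      ((isIncreasing_cons_cons _ _ _).2
        ⟨by rw [Sym2.eq_swap (a := y) (b := u), Sym2.eq_swap (a := u) (b := x), heq],
          isIncreasing_cons_nil _⟩)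
      ((isIncreasing_cons_cons _ _ _).2
        ⟨by rwa [Sym2.eq_swap (a := y) (b := v), Sym2.eq_swap (a := v) (b := x)],
          isIncreasing_cons_nil _⟩)
    exact huv (congrArg (·.getVert 1) this)

lemma eq_one_and_eq_two_of_lt {a b : ℝ} (hab : a < b) (ha : a = 1 ∨ a = 2)
    (hb : b = 1 ∨ b = 2) : a = 1 ∧ b = 2 := by
  rcases ha with rfl | rfl <;> rcases hb with rfl | rfl <;>
    first | exact ⟨rfl, rfl⟩ | norm_num at hab

lemma labels_eq_one_two_of_isIncreasing_cons_cons
    (hval : ∀ e ∈ G.edgeSet, lab e = 1 ∨ lab e = 2)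
    (hne : ∀ ⦃x u y⦄, G.Adj x u → G.Adj u y → x ≠ y → lab s(x, u) ≠ lab s(u, y))
    {x u v y : V} {h₁ : G.Adj x u} {h₂ : G.Adj u v} {r : G.Walk v y}
    (hp : (cons h₁ (cons h₂ r)).IsPath) (hi : IsIncreasing G lab (cons h₁ (cons h₂ r))) :
    lab s(x, u) = 1 ∧ lab s(u, v) = 2 := by
  have hxv : x ≠ v := fun h => by simp_all [cons_isPath_iff]
  exact eq_one_and_eq_two_of_lt (((isIncreasing_cons_cons _ _ _).1 hi).1.lt_of_ne
    (hne h₁ h₂ hxv)) (hval _ h₁) (hval _ h₂)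

lemma not_isIncreasing_cons_cons_cons
    (hval : ∀ e ∈ G.edgeSet, lab e = 1 ∨ lab e = 2)
    (hne : ∀ ⦃x u y⦄, G.Adj x u → G.Adj u y → x ≠ y → lab s(x, u) ≠ lab s(u, y))
    {x u v w y : V} {h₁ : G.Adj x u} {h₂ : G.Adj u v} {h₃ : G.Adj v w} {r : G.Walk w y}
    (hp : (cons h₁ (cons h₂ (cons h₃ r))).IsPath) :
    ¬ IsIncreasing G lab (cons h₁ (cons h₂ (cons h₃ r))) := by
  intro hi
  have h₁₂ := labels_eq_one_two_of_isIncreasing_cons_cons hval hne hp hi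
  have h₂₃ := labels_eq_one_two_of_isIncreasing_cons_cons hval hne hp.of_cons
    ((isIncreasing_cons_cons _ _ _).1 hi).2
  linarith [h₁₂.2, h₂₃.1]

theorem isGoodLabeling_of_cliqueFree_three (hG : G.CliqueFree 3)
    (hval : ∀ e ∈ G.edgeSet, lab e = 1 ∨ lab e = 2)
    (hne : ∀ ⦃x u y⦄, G.Adj x u → G.Adj u y → x ≠ y → lab s(x, u) ≠ lab s(u, y)) :
    IsGoodLabeling G lab := by
  classical
  intro x y p q hp hq hip hiq
  match p, q, hp, hq, hip, hiq with
  | .nil, q, _, hq, _, _ => exact (eq_nil_iff_nil.2 (isPath_iff_nil.1 hq)).symm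
  | p, .nil, hp, _, _, _ => exact eq_nil_iff_nil.2 (isPath_iff_nil.1 hp)
  | .cons _ (.cons _ (.cons _ _)), _, hp, _, hip, _ =>
    exact (not_isIncreasing_cons_cons_cons hval hne hp hip).elim
  | _, .cons _ (.cons _ (.cons _ _)), _, hq, _, hiq =>
    exact (not_isIncreasing_cons_cons_cons hval hne hq hiq).elim
  | .cons _ .nil, .cons _ .nil, _, _, _, _ => rfl
  | .cons hxy .nil, .cons hxu (.cons huy .nil), _, _, _, _ =>
    exact (hG _ (is3Clique_triple_iff.2 ⟨hxu, hxy, huy⟩)).elim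
  | .cons hxu (.cons huy .nil), .cons hxy .nil, _, _, _, _ =>
    exact (hG _ (is3Clique_triple_iff.2 ⟨hxu, hxy, huy⟩)).elim
  | .cons (v := u) hxu (.cons _ .nil), .cons (v := u') hxu' (.cons _ .nil), hp, hq, hip, hiq =>
    obtain rfl : u = u' := by
      by_contra huu'
      refine hne hxu.symm hxu' huu' ?_
      rw [Sym2.eq_swap, (labels_eq_one_two_of_isIncreasing_cons_cons hval hne hp hip).1,
        (labels_eq_one_two_of_isIncreasing_cons_cons hval hne hq hiq).1]
    rfl

end IncreasingPaths

lemma c4_adj_iff {i j : ZMod 4} : C4.Adj i j ↔ j = i + 1 ∨ i = j + 1 := by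
  rw [C4, fromRel_adj]
  refine and_iff_right_of_imp ?_
  revert i j
  decide

lemma c4_cliqueFree_three : C4.CliqueFree 3 := by
  intro t ht
  obtain ⟨a, b, c, -, -, -, rfl⟩ := Finset.card_eq_three.1 ht.card_eq
  rw [is3Clique_triple_iff, c4_adj_iff, c4_adj_iff, c4_adj_iff] at ht
  revert a b c
  decide

lemma c4_label_ne_of_adj {lab : Sym2 (ZMod 4) → ℝ}
    (halt : ∀ i : ZMod 4, lab s(i, i + 1) ≠ lab s(i + 1, i + 2)) ⦃x u y : ZMod 4⦄
    (hxu : C4.Adj x u) (huy : C4.Adj u y) (hxy : x ≠ y) : lab s(x, u) ≠ lab s(u, y) := by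
  rw [c4_adj_iff] at hxu huy
  rcases hxu with rfl | rfl <;> rcases huy with rfl | huy
  · rw [add_assoc, one_add_one_eq_two]
    exact halt x
  · exact absurd (add_right_cancel huy) hxy
  · exact absurd rfl hxy
  · subst huy
    rw [add_assoc, one_add_one_eq_two, Sym2.eq_swap (a := y + 2),
      Sym2.eq_swap (a := y + 1) (b := y)]
    exact (halt y).symm

/-- An edge-labeling of `C₄` with values in `{1, 2}` is good if and only if its edges take
alternately the values `1` and `2` in cyclic order, i.e., any two edges of `C₄` sharing a
vertex receive distinct labels. -/
theorem c4_good_iff_alternating (lab : Sym2 (ZMod 4) → ℝ)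
    (hval : ∀ e ∈ C4.edgeSet, lab e = 1 ∨ lab e = 2) :
    IsGoodLabeling C4 lab ↔ ∀ i : ZMod 4, lab s(i, i + 1) ≠ lab s(i + 1, i + 2) := by
  refine ⟨fun hgood i => ?_, fun halt =>
    isGoodLabeling_of_cliqueFree_three c4_cliqueFree_three hval (c4_label_ne_of_adj halt)⟩
  have hsquare : C4.Adj i (i + 1) ∧ C4.Adj (i + 1) (i + 2) ∧ C4.Adj i (i + 3) ∧
      C4.Adj (i + 3) (i + 2) ∧ i ≠ i + 2 ∧ i + 1 ≠ i + 3 := by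
    simp only [c4_adj_iff]
    revert i
    decide
  obtain ⟨h₁, h₂, h₃, h₄, h₁₃, h₂₄⟩ := hsquare
  exact hgood.label_ne_of_square h₁ h₂ h₃ h₄ h₁₃ h₂₄
end

section
/- For any good edge-labeling λ of the propagation gadget P taking at most 2 distinct values (i.e., any 2-gel of P), the two bones of P receive the same label: λ(u_1 u_2) = λ(v_1 v_2). -/
/-- The propagation gadget, with vertices `0 = u₁`, `1 = u₂`, `2 = v₁`, `3 = v₂`,
`4 = w₁`, `5 = w₁'`, `6 = w₂`, `7 = w₂'`: the two bones `u₁u₂`, `v₁v₂` together with,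
for each `i ∈ {1,2}`, two internally disjoint paths of length two from `uᵢ` to `vᵢ`. -/
def PropGadget : SimpleGraph (Fin 8) :=
  SimpleGraph.fromEdgeSet
    {s(0, 1), s(2, 3), s(0, 4), s(4, 2), s(0, 5), s(5, 2), s(1, 6), s(6, 3), s(1, 7), s(7, 3)}

/-!
Suppose the bones carry labels `a < b` (the case `b < a` follows by negating the labeling,
which preserves goodness). All labels lie in `{a, b}`. Of the two paths `u₁ w v₁`, if neither
reads `(a, b)` then both are non-increasing, i.e. both are increasing from `v₁` to `u₁`; hence
some `u₁ w₁ v₁` reads `(a, b)`, and likewise some `u₂ w₂ v₂`. Then `u₁ u₂ w₂ v₂` and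
`u₁ w₁ v₁ v₂` are two increasing paths from `u₁` to `v₂`.
-/

theorem Set.eq_or_eq_of_ncard_le_two {α : Type*} {s : Set α} (hs : s.Finite)
    (hcard : s.ncard ≤ 2) {a b c : α} (ha : a ∈ s) (hb : b ∈ s) (hab : a ≠ b) (hc : c ∈ s) :
    c = a ∨ c = b := by
  by_contra! h
  have : 2 < s.ncard := (Set.two_lt_ncard_iff hs).2 ⟨a, b, c, ha, hb, hc, hab, h.1.symm, h.2.symm⟩
  omega

section

variable {V : Type*} {G : SimpleGraph V} {lab : Sym2 V → ℝ}

theorem isIncreasing_iff {x y : V} (p : G.Walk x y) :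
    IsIncreasing G lab p ↔ (p.edges.map lab).IsChain (· ≤ ·) :=
  Iff.rfl

theorem isIncreasing_neg_iff {x y : V} (p : G.Walk x y) :
    IsIncreasing G (-lab) p ↔ IsIncreasing G lab p.reverse := by
  simp only [isIncreasing_iff, SimpleGraph.Walk.edges_reverse, List.map_reverse,
    List.isChain_reverse, List.isChain_map, Pi.neg_apply, neg_le_neg_iff]

theorem IsGoodLabeling.neg (h : IsGoodLabeling G lab) : IsGoodLabeling G (-lab) := by
  intro x y p q hp hq hpi hqi
  rw [isIncreasing_neg_iff] at hpi hqi
  simpa using congrArg SimpleGraph.Walk.reverse <|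
    h y x p.reverse q.reverse (by simpa) (by simpa) hpi hqi

theorem IsGoodLabeling.not_increasing_two_edge_paths (h : IsGoodLabeling G lab) {x w w' y : V}
    (hxy : x ≠ y) (hww' : w ≠ w') (hxw : G.Adj x w) (hwy : G.Adj w y) (hxw' : G.Adj x w')
    (hw'y : G.Adj w' y) :
    ¬(lab s(x, w) ≤ lab s(w, y) ∧ lab s(x, w') ≤ lab s(w', y)) := by
  rintro ⟨hp, hq⟩
  have := congrArg SimpleGraph.Walk.support <|
    h x y (.cons hxw (.cons hwy .nil)) (.cons hxw' (.cons hw'y .nil))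
      (by simp [SimpleGraph.Walk.isPath_def, hxy, hxw.ne, hwy.ne])
      (by simp [SimpleGraph.Walk.isPath_def, hxy, hxw'.ne, hw'y.ne])
      (by simp [isIncreasing_iff, hp]) (by simp [isIncreasing_iff, hq])
  simp_all

theorem IsGoodLabeling.not_increasing_three_edge_paths (h : IsGoodLabeling G lab)
    {x a b c d y : V} (hac : a ≠ c) (hxa : G.Adj x a) (hab : G.Adj a b) (hby : G.Adj b y)
    (hxc : G.Adj x c) (hcd : G.Adj c d) (hdy : G.Adj d y)
    (hp : [x, a, b, y].Nodup) (hq : [x, c, d, y].Nodup)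
    (hp₁ : lab s(x, a) ≤ lab s(a, b)) (hp₂ : lab s(a, b) ≤ lab s(b, y))
    (hq₁ : lab s(x, c) ≤ lab s(c, d)) (hq₂ : lab s(c, d) ≤ lab s(d, y)) : False := by
  have := congrArg SimpleGraph.Walk.support <|
    h x y (.cons hxa (.cons hab (.cons hby .nil))) (.cons hxc (.cons hcd (.cons hdy .nil)))
      (SimpleGraph.Walk.isPath_def _ |>.2 hp) (SimpleGraph.Walk.isPath_def _ |>.2 hq)
      (by simp [isIncreasing_iff, hp₁, hp₂])
      (by simp [isIncreasing_iff, hq₁, hq₂])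
  simp_all

theorem IsGoodLabeling.exists_rising_two_edge_path (h : IsGoodLabeling G lab) {a b : ℝ}
    (hval : ∀ e ∈ G.edgeSet, lab e = a ∨ lab e = b) (hab : a < b) {x w w' y : V}
    (hxy : x ≠ y) (hww' : w ≠ w') (hxw : G.Adj x w) (hwy : G.Adj w y) (hxw' : G.Adj x w')
    (hw'y : G.Adj w' y) :
    ∃ z, (z = w ∨ z = w') ∧ lab s(x, z) = a ∧ lab s(z, y) = b := by
  by_contra! hne
  have hdec : ∀ {z}, G.Adj x z → G.Adj z y → (z = w ∨ z = w') → lab s(y, z) ≤ lab s(z, x) := by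
    intro z hxz hzy hz
    rw [Sym2.eq_swap (a := y), Sym2.eq_swap (a := z) (b := x)]
    rcases hval s(x, z) hxz with h₁ | h₁ <;> rcases hval s(z, y) hzy with h₂ | h₂
    all_goals first | linarith | exact absurd h₂ (hne z hz h₁)
  exact h.not_increasing_two_edge_paths hxy.symm hww' hwy.symm hxw.symm hw'y.symm hxw'.symm
    ⟨hdec hxw hwy (.inl rfl), hdec hxw' hw'y (.inr rfl)⟩

end

/-- For any good edge-labeling of the propagation gadget taking at most two distinct values
(i.e. any `2`-gel), the two bones `u₁u₂` and `v₁v₂` receive the same label. -/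
theorem propagation_gadget_bones_equal (lab : Sym2 (Fin 8) → ℝ)
    (hgood : IsGoodLabeling PropGadget lab)
    (h2 : (lab '' PropGadget.edgeSet).ncard ≤ 2) :
    lab s(0, 1) = lab s(2, 3) := by
  by_contra hne
  wlog hlt : lab s(0, 1) < lab s(2, 3) generalizing lab
  · have hcard : ((-lab) '' PropGadget.edgeSet).ncard ≤ 2 := by
      rwa [show -lab = Neg.neg ∘ lab from rfl, Set.image_comp,
        Set.ncard_image_of_injective _ neg_injective]
    have hgt : lab s(2, 3) < lab s(0, 1) := lt_of_le_of_ne (not_lt.1 hlt) (Ne.symm hne)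
    exact this (-lab) hgood.neg hcard (by simpa using hne) (by simpa using hgt)
  have hmem : ∀ e ∈ PropGadget.edgeSet, lab e ∈ lab '' PropGadget.edgeSet :=
    fun e he => Set.mem_image_of_mem lab he
  have hval : ∀ e ∈ PropGadget.edgeSet, lab e = lab s(0, 1) ∨ lab e = lab s(2, 3) :=
    fun e he => Set.eq_or_eq_of_ncard_le_two (Set.toFinite _) h2
      (hmem _ (by simp [PropGadget])) (hmem _ (by simp [PropGadget])) hne (hmem e he)
  obtain ⟨z, hz, h0z, hz2⟩ := hgood.exists_rising_two_edge_path hval hlt (x := 0) (w := 4)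
    (w' := 5) (y := 2) (by decide) (by decide) (by simp [PropGadget]) (by simp [PropGadget])
    (by simp [PropGadget]) (by simp [PropGadget])
  obtain ⟨z', hz', h1z', hz'3⟩ := hgood.exists_rising_two_edge_path hval hlt (x := 1) (w := 6)
    (w' := 7) (y := 3) (by decide) (by decide) (by simp [PropGadget]) (by simp [PropGadget])
    (by simp [PropGadget]) (by simp [PropGadget])
  refine hgood.not_increasing_three_edge_paths (x := 0) (a := 1) (b := z') (c := z) (d := 2)
    (y := 3) ?_ ?_ ?_ ?_ ?_ ?_ ?_ ?_ ?_ h1z'.ge (by rw [h1z', hz'3]; exact hlt.le)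
    (by rw [h0z, hz2]; exact hlt.le) hz2.le
  all_goals rcases hz with rfl | rfl <;> rcases hz' with rfl | rfl <;>
    first | decide | simp [PropGadget]
end
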